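/- Let G be a finite simple graph and let H be one of the following: a complete graph K_n, a complete bipartite graph K_{m,n} with m ≥ 1 and n ≥ 1, or a windmill W_k. Then every edge-injective homomorphism from H to G is injective on vertices, i.e., it is an embedding. -/
import Mathlib


open SimpleGraph

/-- A homomorphism `φ : H →g G` is *edge-injective* if distinct edges of `H`
are mapped to distinct edges of `G`. -/
def EdgeInjective {V W : Type*} {H : SimpleGraph V} {G : SimpleGraph W} (φ : H →g G) : Prop :=
  ∀ e ∈ H.edgeSet, ∀ f ∈ H.edgeSet, Sym2.map φ e = Sym2.map φ f → e = f

/-- The windmill `W_k`: a matching `x_i y_i` (`i ∈ [k]`) together with a center vertex `c`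
adjacent to all other vertices.  The vertex `none` is the center and `some (i, a)` are the
matching vertices. -/
def windmill (k : ℕ) : SimpleGraph (Option (Fin k × Fin 2)) :=
  SimpleGraph.fromRel (fun x y =>
    (x = none ∧ y ≠ none) ∨ (∃ i, x = some (i, 0) ∧ y = some (i, 1)))

/-- Two vertices with a common neighbor have distinct images under an
edge-injective homomorphism. -/
lemma key_common_nbr {V W : Type*} {H : SimpleGraph V} {G : SimpleGraph W}
    (φ : H →g G) (hφ : EdgeInjective φ) {a b c : V}
    (hac : H.Adj a c) (hbc : H.Adj b c) (hab : φ a = φ b) : a = b := by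
  have h := hφ s(a, c) hac s(b, c) hbc (by simp [hab])
  rw [Sym2.eq_iff] at h
  rcases h with ⟨h1, -⟩ | ⟨h1, h2⟩
  · exact h1
  · exact h1.trans h2

/-- Every edge-injective homomorphism from a complete graph `K_n`, a complete bipartite
graph `K_{m,n}` with `m, n ≥ 1`, or a windmill `W_k` into a simple graph `G` is injective on
vertices, i.e. an embedding. -/
theorem edgeInjective_clique_biclique_windmill_injective
    {W : Type*} (G : SimpleGraph W) :
    (∀ (n : ℕ) (φ : (⊤ : SimpleGraph (Fin n)) →g G),
        EdgeInjective φ → Function.Injective ⇑φ) ∧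
    (∀ (m n : ℕ), 1 ≤ m → 1 ≤ n →
      ∀ (φ : completeBipartiteGraph (Fin m) (Fin n) →g G),
        EdgeInjective φ → Function.Injective ⇑φ) ∧
    (∀ (k : ℕ) (φ : windmill k →g G),
        EdgeInjective φ → Function.Injective ⇑φ) := by
  refine ⟨?_, ?_, ?_⟩
  · intro n φ _ u v huv
    by_contra h
    have hadj : G.Adj (φ u) (φ v) := φ.map_adj (by simpa using h)
    rw [huv] at hadj
    exact G.irrefl hadj
  · intro m n hm hn φ hφ u v huv
    match u, v with
    | Sum.inl a, Sum.inl b =>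
      exact key_common_nbr φ hφ (c := Sum.inr ⟨0, hn⟩) (by simp) (by simp) huv
    | Sum.inr a, Sum.inr b =>
      exact key_common_nbr φ hφ (c := Sum.inl ⟨0, hm⟩) (by simp) (by simp) huv
    | Sum.inl a, Sum.inr b =>
      have hadj : G.Adj (φ (Sum.inl a)) (φ (Sum.inr b)) := φ.map_adj (by simp)
      rw [huv] at hadj
      exact absurd hadj (G.irrefl)
    | Sum.inr a, Sum.inl b =>
      have hadj : G.Adj (φ (Sum.inr a)) (φ (Sum.inl b)) := φ.map_adj (by simp)
      rw [huv] at hadj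
      exact absurd hadj (G.irrefl)
  · intro k φ hφ u v huv
    have hcenter : ∀ p : Fin k × Fin 2, (windmill k).Adj none (some p) := by
      intro p
      simp [windmill, SimpleGraph.fromRel_adj]
    match u, v with
    | none, none => rfl
    | none, some p =>
      have hadj : G.Adj (φ none) (φ (some p)) := φ.map_adj (hcenter p)
      rw [huv] at hadj
      exact absurd hadj (G.irrefl)
    | some p, none =>
      have hadj : G.Adj (φ (some p)) (φ none) := φ.map_adj ((hcenter p).symm)
      rw [huv] at hadj
      exact absurd hadj (G.irrefl)
    | some p, some q =>
      exact key_common_nbr φ hφ (c := none) ((hcenter p).symm) ((hcenter q).symm) huv
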